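/- arXiv:1808.01008 — 2 statements merged into one kernel-verified Lean document; each statement's English description precedes it below -/
import Mathlib

section
/- Let a = (a_1,…,a_m) and b = (b_1,…,b_t) be compositions of n with a_1 > 2b_1 (Pure Contraction); note b_1 < n, so t ≥ 2. Set a' = (a_1 − 2b_1, b_1, a_2,…,a_m) and b' = (b_2,…,b_t), which are compositions of n − b_1. Then M(a|b) and M(a'|b') have the same number of cycle components and the same number of path components; in particular ind(a,b) = ind(a',b'). -/
open scoped Classical

/-- Vertices `j` and `k` of `{1,…,n}` (encoded as `Fin n`, vertex `v` is `v+1`) are joined by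
an edge determined by the composition `a`. -/
def CompEdge {n : ℕ} (a : Composition n) (j k : Fin n) : Prop :=
  j ≠ k ∧ ∃ i : Fin a.length,
    a.sizeUpTo i < (j : ℕ) + 1 ∧ (j : ℕ) + 1 ≤ a.sizeUpTo (i + 1) ∧
    a.sizeUpTo i < (k : ℕ) + 1 ∧ (k : ℕ) + 1 ≤ a.sizeUpTo (i + 1) ∧
    ((j : ℕ) + 1) + ((k : ℕ) + 1) = 2 * a.sizeUpTo i + a.blocksFun i + 1

lemma CompEdge.symm {n : ℕ} {a : Composition n} {j k : Fin n} (h : CompEdge a j k) :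
    CompEdge a k j := by
  obtain ⟨hne, i, h1, h2, h3, h4, h5⟩ := h
  exact ⟨hne.symm, i, h3, h4, h1, h2, by omega⟩

/-- The meander `M(a|b)` of the pair of compositions `(a, b)` of `n`. -/
def Meander {n : ℕ} (a b : Composition n) : SimpleGraph (Fin n) where
  Adj j k := CompEdge a j k ∨ CompEdge b j k
  symm := by
    constructor
    intro j k h
    rcases h with h | h
    · exact Or.inl h.symm
    · exact Or.inr h.symm
  loopless := by
    constructor
    intro j h
    rcases h with ⟨hne, _⟩ | ⟨hne, _⟩ <;> exact hne rfl

/-- A connected component of the meander is a cycle if each of its vertices is incident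
to both a top edge and a bottom edge. -/
def IsCycleComp {n : ℕ} (a b : Composition n) (c : (Meander a b).ConnectedComponent) : Prop :=
  ∀ v : Fin n, (Meander a b).connectedComponentMk v = c →
    (∃ w, CompEdge a v w) ∧ (∃ w, CompEdge b v w)

/-- The number of cycle components of the meander `M(a|b)`. -/
noncomputable def cycleCount {n : ℕ} (a b : Composition n) : ℕ :=
  Nat.card {c : (Meander a b).ConnectedComponent // IsCycleComp a b c}

/-- The number of path components of the meander `M(a|b)`. -/
noncomputable def pathCount {n : ℕ} (a b : Composition n) : ℕ :=
  Nat.card {c : (Meander a b).ConnectedComponent // ¬ IsCycleComp a b c}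

/-- The index `ind(a,b) = 2C + P - 1` of a pair of compositions of `n`. -/
noncomputable def seaweedInd {n : ℕ} (a b : Composition n) : ℕ :=
  2 * cycleCount a b + pathCount a b - 1

/-- `C(n,k)`: the number of ordered pairs of compositions of `n` of index `k`. -/
noncomputable def Cnk (n k : ℕ) : ℕ :=
  Nat.card {p : Composition n × Composition n // seaweedInd p.1 p.2 = k}

/-! Write `k = b₁` and `a₁ = c + 2k`. The first `k` vertices all lie in the first top block, and
their top partners are the last `k` vertices of that block. Identifying each of the first `k`
vertices with its top partner and moving every other vertex down by `k` carries `M(a|b)` onto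
`M(a'|b')`: top arcs at the removed vertices collapse, the bottom arcs of the first bottom block
become the top arcs of the new block `k`, and the remaining arcs are translated. So the
components correspond. A vertex of `M(a'|b')` has both a top and a bottom edge exactly when all
its preimages do: the only vertex that loses an edge is the middle of the new block `k` (for `k`
odd), and among its preimages is the middle of the first bottom block, which has no bottom edge.
Hence cycles correspond to cycles. -/

namespace SimpleGraph

variable {V W : Type*} {G : SimpleGraph V} {H : SimpleGraph W}

theorem Reachable.lift {g : V → W} (hg : ∀ u v, G.Adj u v → H.Reachable (g u) (g v))
    {u v : V} (huv : G.Reachable u v) : H.Reachable (g u) (g v) := by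
  rw [reachable_iff_reflTransGen] at huv ⊢
  exact huv.lift' g fun u v h => (reachable_iff_reflTransGen _ _).mp (hg u v h)

theorem reachable_iff_of_retraction {g : V → W} {f : W → V}
    (hg : ∀ u v, G.Adj u v → H.Reachable (g u) (g v))
    (hf : ∀ x y, H.Adj x y → G.Reachable (f x) (f y))
    (hfg : ∀ v, G.Reachable (f (g v)) v) (u v : V) :
    G.Reachable u v ↔ H.Reachable (g u) (g v) :=
  ⟨Reachable.lift hg, fun h => ((hfg u).symm.trans (Reachable.lift hf h)).trans (hfg v)⟩

namespace ConnectedComponent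

noncomputable def equivOfReachableIff (g : V → W) (hg : g.Surjective)
    (h : ∀ u v, G.Reachable u v ↔ H.Reachable (g u) (g v)) :
    G.ConnectedComponent ≃ H.ConnectedComponent :=
  Equiv.ofBijective
    (ConnectedComponent.lift (fun v => H.connectedComponentMk (g v))
      fun u v p _ => ConnectedComponent.sound ((h u v).mp p.reachable))
    ⟨fun C D => C.ind₂ (fun u v huv => ConnectedComponent.sound ((h u v).mpr
      (ConnectedComponent.exact huv))) D,
    fun C => C.ind fun y => (hg y).elim fun v hv => ⟨G.connectedComponentMk v, by simp [hv]⟩⟩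

@[simp]
theorem equivOfReachableIff_mk {g : V → W} (hg : g.Surjective)
    (h : ∀ u v, G.Reachable u v ↔ H.Reachable (g u) (g v)) (v : V) :
    equivOfReachableIff g hg h (G.connectedComponentMk v) = H.connectedComponentMk (g v) :=
  rfl

theorem forall_iff_forall_equivOfReachableIff {g : V → W} (hg : g.Surjective)
    (h : ∀ u v, G.Reachable u v ↔ H.Reachable (g u) (g v)) {P : V → Prop} {Q : W → Prop}
    (hPQ : ∀ y, Q y ↔ ∀ v, g v = y → P v) (C : G.ConnectedComponent) :
    (∀ v, G.connectedComponentMk v = C → P v) ↔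
      ∀ y, H.connectedComponentMk y = equivOfReachableIff g hg h C → Q y := by
  induction C using ConnectedComponent.ind with
  | h w =>
    simp only [equivOfReachableIff_mk, ConnectedComponent.eq, hPQ]
    exact ⟨fun hP y hy v hv => hP v ((h v w).mpr (hv ▸ hy)),
      fun hQ v hv => hQ (g v) ((h v w).mp hv) v rfl⟩

end ConnectedComponent

end SimpleGraph

/-- Arcs of the blocks `L` laid out on the (1-indexed) positions `off + 1, off + 2, …`. -/
def BlockArc : List ℕ → ℕ → ℕ → ℕ → Prop
  | [], _, _, _ => False
  | m :: L, off, p, q =>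
    (p ≠ q ∧ off < p ∧ off < q ∧ p + q = 2 * off + m + 1) ∨ BlockArc L (off + m) p q

theorem blockArc_iff_exists {L : List ℕ} {off p q : ℕ} :
    BlockArc L off p q ↔ p ≠ q ∧ ∃ i, ∃ hi : i < L.length,
      off + (L.take i).sum < p ∧ off + (L.take i).sum < q ∧
        p + q = 2 * (off + (L.take i).sum) + L[i] + 1 := by
  induction L generalizing off with
  | nil => simp [BlockArc]
  | cons m L ih =>
    simp only [BlockArc, ih]
    constructor
    · rintro (⟨hne, h⟩ | ⟨hne, i, hi, h⟩)
      · exact ⟨hne, 0, by simp, by simpa using h⟩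
      · exact ⟨hne, i + 1, by simpa using hi, by simpa [← add_assoc] using h⟩
    · rintro ⟨hne, _ | i, hi, h⟩
      · exact Or.inl ⟨hne, by simpa using h⟩
      · exact Or.inr ⟨hne, i, by simpa using hi, by simpa [← add_assoc] using h⟩

theorem BlockArc.lt_left {L : List ℕ} {off p q : ℕ} (h : BlockArc L off p q) : off < p := by
  induction L generalizing off with
  | nil => exact h.elim
  | cons m L ih => exact h.elim (·.2.1) fun h => (ih h).trans_le' (Nat.le_add_right off m)

theorem BlockArc.symm {L : List ℕ} {off p q : ℕ} (h : BlockArc L off p q) :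
    BlockArc L off q p := by
  induction L generalizing off with
  | nil => exact h.elim
  | cons m L ih => exact h.imp (fun h => by omega) ih

theorem BlockArc.right_le {L : List ℕ} {off p q : ℕ} (h : BlockArc L off p q) :
    q ≤ off + L.sum := by
  induction L generalizing off with
  | nil => exact h.elim
  | cons m L ih =>
    rw [List.sum_cons, ← add_assoc]
    exact h.elim (fun h => by omega) fun h => (ih h).trans (by omega)

theorem blockArc_shift {L : List ℕ} {off p q off' p' q' d : ℕ} (ho : off' = off + d)
    (hp : p' = p + d) (hq : q' = q + d) : BlockArc L off' p' q' ↔ BlockArc L off p q := by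
  subst ho hp hq
  induction L generalizing off with
  | nil => rfl
  | cons m L ih =>
    simp only [BlockArc, Nat.add_right_comm off d m, ih]
    exact or_congr_left (by omega)

theorem exists_blockArc_shift {L : List ℕ} {off p off' p' d : ℕ} (ho : off' = off + d)
    (hp : p' = p + d) : (∃ q, BlockArc L off' p' q) ↔ ∃ q, BlockArc L off p q := by
  constructor
  · rintro ⟨q, h⟩
    have := h.symm.lt_left
    exact ⟨q - d, (blockArc_shift ho hp (by omega)).mp h⟩
  · rintro ⟨q, h⟩
    exact ⟨q + d, (blockArc_shift ho hp rfl).mpr h⟩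

theorem exists_blockArc_cons {m : ℕ} {L : List ℕ} {off p : ℕ} :
    (∃ q, BlockArc (m :: L) off p q) ↔
      (off < p ∧ p ≤ off + m ∧ 2 * p ≠ 2 * off + m + 1) ∨ ∃ q, BlockArc L (off + m) p q := by
  simp only [BlockArc, exists_or]
  refine or_congr_left ⟨?_, fun h => ⟨2 * off + m + 1 - p, by omega⟩⟩
  rintro ⟨q, h⟩
  omega

theorem compEdge_iff_blockArc {n : ℕ} (a : Composition n) (j k : Fin n) :
    CompEdge a j k ↔ BlockArc a.blocks 0 (j + 1) (k + 1) := by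
  simp only [CompEdge, blockArc_iff_exists, zero_add, ne_eq, add_left_inj, Fin.val_inj]
  refine and_congr_right fun _ => ⟨?_, ?_⟩
  · rintro ⟨i, h⟩
    have := a.sizeUpTo_succ i.isLt
    refine ⟨i, i.isLt, ?_⟩
    simp only [Composition.sizeUpTo, Composition.blocksFun, List.get_eq_getElem] at *
    omega
  · rintro ⟨i, hi, h⟩
    have := a.sizeUpTo_succ hi
    refine ⟨⟨i, hi⟩, ?_⟩
    simp only [Composition.sizeUpTo, Composition.blocksFun, List.get_eq_getElem] at *
    omega

theorem exists_compEdge_iff {n : ℕ} (a : Composition n) (v : Fin n) :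
    (∃ w, CompEdge a v w) ↔ ∃ q, BlockArc a.blocks 0 (v + 1) q := by
  simp only [compEdge_iff_blockArc]
  refine ⟨fun ⟨w, h⟩ => ⟨_, h⟩, fun ⟨q, h⟩ => ?_⟩
  have h₀ := h.symm.lt_left
  have h₁ := h.right_le
  rw [a.blocks_sum] at h₁
  exact ⟨⟨q - 1, by omega⟩, by rwa [Nat.sub_add_cancel h₀]⟩

theorem meander_adj_iff {n : ℕ} {a b : Composition n} {u v : Fin n} :
    (Meander a b).Adj u v ↔
      BlockArc a.blocks 0 (u + 1) (v + 1) ∨ BlockArc b.blocks 0 (u + 1) (v + 1) :=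
  or_congr (compEdge_iff_blockArc a u v) (compEdge_iff_blockArc b u v)

structure IsPureContraction {n : ℕ} (c k : ℕ) (a b : Composition n)
    (a' b' : Composition (n - k)) : Prop where
  top : ∃ as, a.blocks = (c + 2 * k) :: as ∧ a'.blocks = c :: k :: as
  bottom : b.blocks = k :: b'.blocks

def shiftVertex {n : ℕ} (k : ℕ) (y : Fin (n - k)) : Fin n :=
  ⟨y + k, by omega⟩

@[simp]
theorem val_shiftVertex {n k : ℕ} (y : Fin (n - k)) : (shiftVertex k y : ℕ) = y + k :=
  rfl

namespace IsPureContraction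

variable {n c k : ℕ} {a b : Composition n} {a' b' : Composition (n - k)}

theorem add_two_mul_le (h : IsPureContraction c k a b a' b') : c + 2 * k ≤ n := by
  obtain ⟨as, ha, -⟩ := h.top
  have := a.blocks_sum
  rw [ha, List.sum_cons] at this
  omega

/-- A vertex `v < k` is first identified with its top partner `c + 2k - 1 - v`. -/
def contractVertex (h : IsPureContraction c k a b a' b') (v : Fin n) : Fin (n - k) :=
  if hv : k ≤ v then ⟨v - k, by omega⟩
  else ⟨c + k - 1 - v, by have := h.add_two_mul_le; omega⟩

theorem adj_of_add_eq (h : IsPureContraction c k a b a' b') {u v : Fin n}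
    (hne : (u : ℕ) ≠ v) (hsum : (u : ℕ) + v + 1 = c + 2 * k) : (Meander a b).Adj u v := by
  obtain ⟨as, ha, -⟩ := h.top
  rw [meander_adj_iff, ha]
  exact .inl (.inl ⟨by omega, by omega, by omega, by omega⟩)

theorem reachable_of_adj (h : IsPureContraction c k a b a' b') {x y : Fin (n - k)}
    (hxy : (Meander a' b').Adj x y) :
    (Meander a b).Reachable (shiftVertex k x) (shiftVertex k y) := by
  obtain ⟨as, ha, ha'⟩ := h.top
  have := h.add_two_mul_le
  have hx := val_shiftVertex (n := n) x
  have hy := val_shiftVertex (n := n) y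
  rw [meander_adj_iff, ha'] at hxy
  simp only [BlockArc, zero_add, mul_zero] at hxy
  rcases hxy with (hfirst | hsecond | hA) | hB
  · exact (h.adj_of_add_eq (by omega) (by omega)).reachable
  · -- the new arc replaces the path from `x + k` via its top partner `r` and `r`'s bottom
    -- partner `s` to `y + k`
    let r : Fin n := ⟨c + k - 1 - x, by omega⟩
    let s : Fin n := ⟨x - c, by omega⟩
    have hr : (r : ℕ) = c + k - 1 - x := rfl
    have hs : (s : ℕ) = x - c := rfl
    have hrs : (Meander a b).Adj r s := by
      rw [meander_adj_iff, h.bottom]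
      exact .inr (.inl ⟨by omega, by omega, by omega, by omega⟩)
    have hxr : (Meander a b).Adj (shiftVertex k x) r := h.adj_of_add_eq (by omega) (by omega)
    have hsy : (Meander a b).Adj s (shiftVertex k y) := h.adj_of_add_eq (by omega) (by omega)
    exact (hxr.reachable.trans hrs.reachable).trans hsy.reachable
  · refine (meander_adj_iff.mpr (.inl ?_)).reachable
    rw [ha]
    exact .inr ((blockArc_shift (d := k) (by omega) (by omega) (by omega)).mpr hA)
  · refine (meander_adj_iff.mpr (.inr ?_)).reachable
    rw [h.bottom]
    exact .inr ((blockArc_shift (d := k) (by omega) (by omega) (by omega)).mpr hB)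

variable (h : IsPureContraction c k a b a' b')

theorem val_contractVertex (v : Fin n) :
    (h.contractVertex v : ℕ) = if k ≤ v then v - k else c + k - 1 - v := by
  unfold contractVertex
  split_ifs <;> rfl

theorem contractVertex_shiftVertex (y : Fin (n - k)) : h.contractVertex (shiftVertex k y) = y :=
  Fin.ext (by simp [val_contractVertex])

theorem contractVertex_surjective : Function.Surjective h.contractVertex :=
  fun y => ⟨_, h.contractVertex_shiftVertex y⟩

theorem reachable_shiftVertex_contractVertex (v : Fin n) :
    (Meander a b).Reachable (shiftVertex k (h.contractVertex v)) v := by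
  have hv := h.val_contractVertex v
  have hsv := val_shiftVertex (n := n) (h.contractVertex v)
  split_ifs at hv
  · rw [show shiftVertex k (h.contractVertex v) = v from Fin.ext (by omega)]
  · exact (h.adj_of_add_eq (by omega) (by omega)).reachable

theorem eq_or_adj_of_adj {u v : Fin n} (huv : (Meander a b).Adj u v) :
    h.contractVertex u = h.contractVertex v ∨
      (Meander a' b').Adj (h.contractVertex u) (h.contractVertex v) := by
  obtain ⟨as, ha, ha'⟩ := h.top
  have hu := h.val_contractVertex u
  have hv := h.val_contractVertex v
  rw [meander_adj_iff, ha, h.bottom] at huv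
  rw [Fin.ext_iff, meander_adj_iff, ha']
  simp only [BlockArc, zero_add, mul_zero] at huv ⊢
  rcases huv with (htop | hA) | (hbot | hB)
  · split_ifs at hu hv
    · exact .inr (.inl (.inl (by omega)))
    all_goals exact .inl (by omega)
  · have := hA.lt_left
    have := hA.symm.lt_left
    rw [if_pos (by omega)] at hu hv
    exact .inr (.inl (.inr (.inr
      ((blockArc_shift (d := k) (by omega) (by omega) (by omega)).mp hA))))
  · rw [if_neg (by omega)] at hu hv
    exact .inr (.inl (.inr (.inl (by omega))))
  · have := hB.lt_left
    have := hB.symm.lt_left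
    rw [if_pos (by omega)] at hu hv
    exact .inr (.inr ((blockArc_shift (d := k) (by omega) (by omega) (by omega)).mp hB))

theorem reachable_iff (u v : Fin n) :
    (Meander a b).Reachable u v ↔
      (Meander a' b').Reachable (h.contractVertex u) (h.contractVertex v) :=
  SimpleGraph.reachable_iff_of_retraction
    (fun _ _ huv => (h.eq_or_adj_of_adj huv).elim (· ▸ .rfl) (·.reachable))
    (fun _ _ => h.reachable_of_adj) h.reachable_shiftVertex_contractVertex u v

theorem meets_top_and_bottom_of_contractVertex {v : Fin n}
    (hv : (∃ w, CompEdge a' (h.contractVertex v) w) ∧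
      ∃ w, CompEdge b' (h.contractVertex v) w) :
    (∃ w, CompEdge a v w) ∧ ∃ w, CompEdge b v w := by
  obtain ⟨as, ha, ha'⟩ := h.top
  have := h.add_two_mul_le
  simp only [exists_compEdge_iff, ha, ha', h.bottom, exists_blockArc_cons, zero_add,
    mul_zero] at hv ⊢
  obtain ⟨htop, hbot⟩ := hv
  have hgv := h.val_contractVertex v
  split_ifs at hgv
  · rw [hgv] at htop hbot
    refine ⟨?_, .inr ((exists_blockArc_shift (d := k) (by omega) (by omega)).mpr hbot)⟩
    rcases htop with htop | htop | htop
    · exact .inl (by omega)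
    · exact .inl (by omega)
    · exact .inr ((exists_blockArc_shift (d := k) (by omega) (by omega)).mpr htop)
  · refine ⟨.inl (by omega), .inl ⟨by omega, by omega, ?_⟩⟩
    rcases htop with htop | htop | ⟨q, htop⟩
    · omega
    · omega
    · have := htop.lt_left
      omega

theorem meets_top_and_bottom_of_fibre {y : Fin (n - k)}
    (hP : ∀ v, h.contractVertex v = y → (∃ w, CompEdge a v w) ∧ ∃ w, CompEdge b v w) :
    (∃ w, CompEdge a' y w) ∧ ∃ w, CompEdge b' y w := by
  obtain ⟨as, ha, ha'⟩ := h.top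
  have := h.add_two_mul_le
  simp only [exists_compEdge_iff, ha, ha', h.bottom, exists_blockArc_cons, zero_add,
    mul_zero] at hP ⊢
  obtain ⟨htop, hbot⟩ := hP (shiftVertex k y) (h.contractVertex_shiftVertex y)
  simp only [val_shiftVertex] at htop hbot
  refine ⟨?_, ?_⟩
  · rcases htop with htop | htop
    · by_cases hyc : y + 1 ≤ c
      · exact .inl (by omega)
      refine .inr (.inl ⟨by omega, by omega, fun hmid => ?_⟩)
      -- `y` is the middle of the new block `k`; its preimage `v` is the middle of the old one
      let v : Fin n := ⟨c + k - 1 - y, by omega⟩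
      have hv : (v : ℕ) = c + k - 1 - y := rfl
      have hgv := h.val_contractVertex v
      rw [if_neg (by omega)] at hgv
      obtain ⟨-, hbot⟩ := hP v (Fin.ext (by omega))
      rcases hbot with hbot | ⟨q, hbot⟩
      · omega
      · have := hbot.lt_left
        omega
    · exact .inr (.inr ((exists_blockArc_shift (d := k) (by omega) (by omega)).mp htop))
  · rcases hbot with hbot | hbot
    · omega
    · exact (exists_blockArc_shift (d := k) (by omega) (by omega)).mp hbot

theorem isCycleComp_iff (C : (Meander a b).ConnectedComponent) :
    IsCycleComp a b C ↔ IsCycleComp a' b'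
      (SimpleGraph.ConnectedComponent.equivOfReachableIff _ h.contractVertex_surjective
        h.reachable_iff C) :=
  SimpleGraph.ConnectedComponent.forall_iff_forall_equivOfReachableIff _ _
    (fun _ => ⟨fun hy _ hv => h.meets_top_and_bottom_of_contractVertex (hv ▸ hy),
      h.meets_top_and_bottom_of_fibre⟩) C

end IsPureContraction

theorem pure_contraction (n : ℕ) (a b : Composition n) (a₁ b₁ : ℕ) (as bs : List ℕ)
    (ha : a.blocks = a₁ :: as) (hb : b.blocks = b₁ :: bs)
    (h₁ : 2 * b₁ < a₁)
    (a' b' : Composition (n - b₁))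
    (ha' : a'.blocks = (a₁ - 2 * b₁) :: b₁ :: as) (hb' : b'.blocks = bs) :
    cycleCount a b = cycleCount a' b' ∧ pathCount a b = pathCount a' b' ∧
      seaweedInd a b = seaweedInd a' b' := by
  have h : IsPureContraction (a₁ - 2 * b₁) b₁ a b a' b' :=
    ⟨⟨as, by rw [ha, Nat.sub_add_cancel h₁.le], ha'⟩, by rw [hb, hb']⟩
  let e := SimpleGraph.ConnectedComponent.equivOfReachableIff _ h.contractVertex_surjective
    h.reachable_iff
  have hc : cycleCount a b = cycleCount a' b' :=
    Nat.card_congr (e.subtypeEquiv h.isCycleComp_iff)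
  have hp : pathCount a b = pathCount a' b' :=
    Nat.card_congr (e.subtypeEquiv fun C => (h.isCycleComp_iff C).not)
  exact ⟨hc, hp, by rw [seaweedInd, seaweedInd, hc, hp]⟩
end

section
/- Let c ≥ 1 and let a = (c, a_2,…,a_m) and b = (c, b_2,…,b_t) be compositions of n with m ≥ 2 and t ≥ 2 (Component Elimination). Set a' = (a_2,…,a_m) and b' = (b_2,…,b_t), which are compositions of n − c. Then the number of cycle components of M(a|b) equals the number of cycle components of M(a'|b') plus ⌊c/2⌋, and the number of path components of M(a|b) equals the number of path components of M(a'|b') plus (c mod 2); in particular ind(a,b) = ind(a',b') + c. -/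
open scoped Classical

/-!
Both compositions begin with the block `c`, so on the first `c` vertices the top and the bottom
edges coincide: each `v < c` is joined to its mirror image `c - 1 - v` by a top and by a bottom
edge, and no edge leaves this block. These vertices therefore form `⌊c/2⌋` two-cycles, plus one
isolated vertex when `c` is odd, while the remaining vertices, shifted down by `c`, form exactly
`M(a'|b')`. The index formula follows because `M(a'|b')` has at least one component.
-/

open SimpleGraph

namespace SimpleGraph.ConnectedComponent

variable {V β : Type*} {G : SimpleGraph V}

def liftAdj (f : V → β) (h : ∀ v w, G.Adj v w → f v = f w) : G.ConnectedComponent → β :=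
  Quot.lift f fun _ _ hr => hr.elim fun p => by
    clear hr
    induction p with
    | nil => rfl
    | cons hadj _ ih => exact (h _ _ hadj).trans ih

@[simp]
theorem liftAdj_mk (f : V → β) (h : ∀ v w, G.Adj v w → f v = f w) (v : V) :
    liftAdj f h (G.connectedComponentMk v) = f v :=
  rfl

end SimpleGraph.ConnectedComponent

theorem Nat.card_subtype_eq_add_of_equiv_sum {α β γ : Type*} [Finite β] [Finite γ]
    {P : α → Prop} {p : β → Prop} {q : γ → Prop} (e : α ≃ β ⊕ γ)
    (h : ∀ x, P x ↔ Sum.elim p q (e x)) :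
    Nat.card {x // P x} = Nat.card {y // p y} + Nat.card {z // q z} := by
  rw [Nat.card_congr ((e.subtypeEquiv h).trans Equiv.subtypeSum), Nat.card_sum]
  rfl

theorem Nat.card_two_mul_add_one_ne (c : ℕ) :
    Nat.card {i : Fin ((c + 1) / 2) // 2 * (i : ℕ) + 1 ≠ c} = c / 2 := by
  have hiff (i : Fin ((c + 1) / 2)) : 2 * (i : ℕ) + 1 ≠ c ↔ (i : ℕ) < c / 2 := by omega
  rw [Nat.card_eq_fintype_card, Fintype.card_subtype, Finset.filter_congr fun i _ => hiff i,
    Fin.card_filter_val_lt]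
  omega

theorem Nat.card_not_two_mul_add_one_ne (c : ℕ) :
    Nat.card {i : Fin ((c + 1) / 2) // ¬2 * (i : ℕ) + 1 ≠ c} = c % 2 := by
  rw [Nat.card_eq_fintype_card, Fintype.card_subtype_compl, Fintype.card_fin,
    ← Nat.card_eq_fintype_card, Nat.card_two_mul_add_one_ne]
  omega

namespace Composition

variable {n c : ℕ} {a : Composition n} {a' : Composition (n - c)}

theorem sizeUpTo_succ_of_blocks_eq_cons (h : a.blocks = c :: a'.blocks) (k : ℕ) :
    a.sizeUpTo (k + 1) = c + a'.sizeUpTo k := by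
  simp [sizeUpTo, h, List.take_succ_cons]

theorem length_of_blocks_eq_cons (h : a.blocks = c :: a'.blocks) :
    a.length = a'.length + 1 := by
  simp [length, h]

theorem le_of_blocks_eq_cons (h : a.blocks = c :: a'.blocks) : c ≤ n := by
  have hsum := a.blocks_sum
  rw [h, List.sum_cons] at hsum
  omega

end Composition

theorem compEdge_iff {n : ℕ} {a : Composition n} {j k : Fin n} :
    CompEdge a j k ↔ (j : ℕ) ≠ k ∧ ∃ m < a.length,
      a.sizeUpTo m ≤ j ∧ (j : ℕ) < a.sizeUpTo (m + 1) ∧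
      a.sizeUpTo m ≤ k ∧ (k : ℕ) < a.sizeUpTo (m + 1) ∧
      (j : ℕ) + k + 1 = a.sizeUpTo m + a.sizeUpTo (m + 1) := by
  constructor
  · rintro ⟨hne, i, h1, h2, h3, h4, h5⟩
    have hsucc := a.sizeUpTo_succ' i
    exact ⟨Fin.val_ne_of_ne hne, i, i.isLt, by omega, by omega, by omega, by omega, by omega⟩
  · rintro ⟨hne, m, hm, h1, h2, h3, h4, h5⟩
    have hsucc := a.sizeUpTo_succ' ⟨m, hm⟩
    dsimp only at hsucc
    refine ⟨Fin.ne_of_val_ne hne, ⟨m, hm⟩, ?_, ?_, ?_, ?_, ?_⟩ <;> dsimp only <;> omega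

def shiftUp {n : ℕ} (c : ℕ) (v : Fin (n - c)) : Fin n :=
  ⟨v + c, by omega⟩

@[simp]
theorem val_shiftUp {n c : ℕ} (v : Fin (n - c)) : (shiftUp c v : ℕ) = v + c :=
  rfl

theorem exists_shiftUp_eq {n c : ℕ} {v : Fin n} (hv : c ≤ v) : ∃ v', shiftUp c v' = v :=
  ⟨⟨v - c, by omega⟩, Fin.ext (by simp only [val_shiftUp]; omega)⟩

section FirstBlock

variable {n c : ℕ} {a : Composition n} {a' : Composition (n - c)}

theorem compEdge_iff_of_lt (h : a.blocks = c :: a'.blocks) {j k : Fin n} (hj : (j : ℕ) < c) :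
    CompEdge a j k ↔ (j : ℕ) ≠ k ∧ (j : ℕ) + k + 1 = c := by
  have hlen := a.length_of_blocks_eq_cons h
  have hsize := a.sizeUpTo_succ_of_blocks_eq_cons h
  have hzero := a.sizeUpTo_zero
  have hzero' := a'.sizeUpTo_zero
  rw [compEdge_iff]
  constructor
  · rintro ⟨hne, _ | m, -, h1, h2, h3, h4, h5⟩
    · have := hsize 0
      omega
    · have := hsize m
      omega
  · rintro ⟨hne, hsum⟩
    have := hsize 0
    exact ⟨hne, 0, by omega, by omega, by omega, by omega, by omega, by omega⟩

theorem lt_of_compEdge_of_lt (h : a.blocks = c :: a'.blocks) {j k : Fin n}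
    (hjk : CompEdge a j k) (hk : (k : ℕ) < c) : (j : ℕ) < c := by
  have := (compEdge_iff_of_lt h hk).1 hjk.symm
  omega

theorem compEdge_shiftUp_iff (h : a.blocks = c :: a'.blocks) {v w : Fin (n - c)} :
    CompEdge a (shiftUp c v) (shiftUp c w) ↔ CompEdge a' v w := by
  have hlen := a.length_of_blocks_eq_cons h
  have hsize := a.sizeUpTo_succ_of_blocks_eq_cons h
  rw [compEdge_iff, compEdge_iff]
  simp only [val_shiftUp]
  constructor
  · rintro ⟨hne, _ | m, hm, h1, h2, h3, h4, h5⟩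
    · have := hsize 0
      have := a.sizeUpTo_zero
      have := a'.sizeUpTo_zero
      omega
    · have := hsize m
      have := hsize (m + 1)
      exact ⟨by omega, m, by omega, by omega, by omega, by omega, by omega, by omega⟩
  · rintro ⟨hne, m, hm, h1, h2, h3, h4, h5⟩
    have := hsize m
    have := hsize (m + 1)
    exact ⟨by omega, m + 1, by omega, by omega, by omega, by omega, by omega, by omega⟩

theorem exists_compEdge_iff_of_lt (h : a.blocks = c :: a'.blocks) {v : Fin n}
    (hv : (v : ℕ) < c) : (∃ w, CompEdge a v w) ↔ 2 * (v : ℕ) + 1 ≠ c := by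
  constructor
  · rintro ⟨w, hw⟩
    have := (compEdge_iff_of_lt h hv).1 hw
    omega
  · intro hv'
    have := Composition.le_of_blocks_eq_cons h
    exact ⟨⟨c - 1 - v, by omega⟩,
      (compEdge_iff_of_lt h hv).2 ⟨by dsimp only; omega, by dsimp only; omega⟩⟩

theorem exists_compEdge_shiftUp_iff (h : a.blocks = c :: a'.blocks) {v : Fin (n - c)} :
    (∃ w, CompEdge a (shiftUp c v) w) ↔ ∃ w, CompEdge a' v w := by
  constructor
  · rintro ⟨w, hw⟩
    have hw' : c ≤ (w : ℕ) := by
      by_contra hwc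
      have := lt_of_compEdge_of_lt h hw (not_le.1 hwc)
      simp only [val_shiftUp] at this
      omega
    obtain ⟨w', rfl⟩ := exists_shiftUp_eq hw'
    exact ⟨w', (compEdge_shiftUp_iff h).1 hw⟩
  · rintro ⟨w', hw'⟩
    exact ⟨shiftUp c w', (compEdge_shiftUp_iff h).2 hw'⟩

end FirstBlock

namespace Meander

variable {n c : ℕ} {a b : Composition n} {a' b' : Composition (n - c)}

theorem adj_iff_of_lt (ha : a.blocks = c :: a'.blocks) (hb : b.blocks = c :: b'.blocks)
    {v w : Fin n} (hv : (v : ℕ) < c) :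
    (Meander a b).Adj v w ↔ (v : ℕ) ≠ w ∧ (v : ℕ) + w + 1 = c := by
  change CompEdge a v w ∨ CompEdge b v w ↔ _
  rw [compEdge_iff_of_lt ha hv, compEdge_iff_of_lt hb hv, or_self]

theorem adj_shiftUp_iff (ha : a.blocks = c :: a'.blocks) (hb : b.blocks = c :: b'.blocks)
    {v w : Fin (n - c)} :
    (Meander a b).Adj (shiftUp c v) (shiftUp c w) ↔ (Meander a' b').Adj v w := by
  change CompEdge a _ _ ∨ CompEdge b _ _ ↔ CompEdge a' v w ∨ CompEdge b' v w
  rw [compEdge_shiftUp_iff ha, compEdge_shiftUp_iff hb]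

def shiftUpHom (ha : a.blocks = c :: a'.blocks) (hb : b.blocks = c :: b'.blocks) :
    Meander a' b' →g Meander a b :=
  ⟨shiftUp c, (adj_shiftUp_iff ha hb).2⟩

/-- The label of the component of `v` in `M(a|b)`: the two-element (or, in the middle,
one-element) component `{v, c - 1 - v}` of a vertex `v < c` is labelled by its smaller vertex. -/
def componentClass (c : ℕ) (a' b' : Composition (n - c)) (v : Fin n) :
    Fin ((c + 1) / 2) ⊕ (Meander a' b').ConnectedComponent :=
  if hv : (v : ℕ) < c then .inl ⟨min v (c - 1 - v), by omega⟩
  else .inr ((Meander a' b').connectedComponentMk ⟨v - c, by omega⟩)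

theorem componentClass_of_lt {v : Fin n} (hv : (v : ℕ) < c) :
    componentClass c a' b' v = .inl ⟨min v (c - 1 - v), by omega⟩ :=
  dif_pos hv

theorem componentClass_shiftUp (v : Fin (n - c)) :
    componentClass c a' b' (shiftUp c v) = .inr ((Meander a' b').connectedComponentMk v) := by
  rw [componentClass, dif_neg (by simp)]
  congr
  simp

variable (ha : a.blocks = c :: a'.blocks) (hb : b.blocks = c :: b'.blocks)
include ha hb

theorem componentClass_eq_of_adj {v w : Fin n} (hvw : (Meander a b).Adj v w) :
    componentClass c a' b' v = componentClass c a' b' w := by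
  by_cases hv : (v : ℕ) < c
  · have hsum := ((adj_iff_of_lt ha hb hv).1 hvw).2
    rw [componentClass_of_lt hv, componentClass_of_lt (by omega : (w : ℕ) < c)]
    simp only [Sum.inl.injEq, Fin.mk.injEq]
    omega
  · have hw : c ≤ (w : ℕ) := by
      by_contra hw
      have := ((adj_iff_of_lt ha hb (not_le.1 hw)).1 hvw.symm).2
      omega
    obtain ⟨v', rfl⟩ := exists_shiftUp_eq (not_lt.1 hv)
    obtain ⟨w', rfl⟩ := exists_shiftUp_eq hw
    rw [componentClass_shiftUp, componentClass_shiftUp]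
    exact congrArg _ (ConnectedComponent.connectedComponentMk_eq_of_adj
      ((adj_shiftUp_iff ha hb).1 hvw))

def componentEquiv : (Meander a b).ConnectedComponent ≃
    Fin ((c + 1) / 2) ⊕ (Meander a' b').ConnectedComponent where
  toFun := ConnectedComponent.liftAdj (componentClass c a' b')
    fun _ _ => componentClass_eq_of_adj ha hb
  invFun := Sum.elim
    (fun i => (Meander a b).connectedComponentMk
      ⟨i, by have := Composition.le_of_blocks_eq_cons ha; omega⟩)
    (ConnectedComponent.map (shiftUpHom ha hb))
  left_inv := ConnectedComponent.ind fun v => by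
    by_cases hv : (v : ℕ) < c
    · rw [ConnectedComponent.liftAdj_mk, componentClass_of_lt hv, Sum.elim_inl]
      by_cases hmin : (v : ℕ) ≤ c - 1 - v
      · exact congrArg _ (Fin.ext (by dsimp only; omega))
      · refine ConnectedComponent.connectedComponentMk_eq_of_adj
          ((adj_iff_of_lt ha hb ?_).2 ⟨?_, ?_⟩) <;> dsimp only <;> omega
    · obtain ⟨v', rfl⟩ := exists_shiftUp_eq (not_lt.1 hv)
      rw [ConnectedComponent.liftAdj_mk, componentClass_shiftUp]
      rfl
  right_inv := by
    rintro (i | K')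
    · change componentClass c a' b' _ = _
      rw [componentClass_of_lt (by simp only; omega)]
      congr
      simp only
      omega
    · induction K' using ConnectedComponent.ind with
      | h v' => exact componentClass_shiftUp v'

theorem componentEquiv_mk (v : Fin n) :
    componentEquiv ha hb ((Meander a b).connectedComponentMk v) = componentClass c a' b' v :=
  rfl

theorem componentClass_eq_of_mk_eq {u v : Fin n}
    (huv : (Meander a b).connectedComponentMk u = (Meander a b).connectedComponentMk v) :
    componentClass c a' b' u = componentClass c a' b' v := by
  simpa only [componentEquiv_mk] using congrArg (componentEquiv ha hb) huv

theorem isCycleComp_mk_of_lt {v : Fin n} (hv : (v : ℕ) < c) :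
    IsCycleComp a b ((Meander a b).connectedComponentMk v) ↔ 2 * (v : ℕ) + 1 ≠ c := by
  refine ⟨fun hcyc => (exists_compEdge_iff_of_lt ha hv).1 (hcyc v rfl).1, fun hodd u hu => ?_⟩
  have hclass := componentClass_eq_of_mk_eq ha hb hu
  have hu : (u : ℕ) < c := by
    by_contra hu
    obtain ⟨u', rfl⟩ := exists_shiftUp_eq (not_lt.1 hu)
    rw [componentClass_shiftUp, componentClass_of_lt hv] at hclass
    exact Sum.inr_ne_inl hclass
  rw [componentClass_of_lt hu, componentClass_of_lt hv, Sum.inl.injEq, Fin.mk.injEq] at hclass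
  have hodd' : 2 * (u : ℕ) + 1 ≠ c := by omega
  exact ⟨(exists_compEdge_iff_of_lt ha hu).2 hodd', (exists_compEdge_iff_of_lt hb hu).2 hodd'⟩

theorem isCycleComp_map_shiftUpHom (K' : (Meander a' b').ConnectedComponent) :
    IsCycleComp a b (K'.map (shiftUpHom ha hb)) ↔ IsCycleComp a' b' K' := by
  induction K' using ConnectedComponent.ind with | h v' => ?_
  change IsCycleComp a b ((Meander a b).connectedComponentMk (shiftUp c v')) ↔ _
  constructor
  · intro hcyc u' hu'
    have := hcyc (shiftUp c u') (congrArg (ConnectedComponent.map (shiftUpHom ha hb)) hu')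
    rwa [exists_compEdge_shiftUp_iff ha, exists_compEdge_shiftUp_iff hb] at this
  · intro hcyc u hu
    have hclass := componentClass_eq_of_mk_eq ha hb hu
    rw [componentClass_shiftUp] at hclass
    have hu : c ≤ (u : ℕ) := by
      by_contra hu
      rw [componentClass_of_lt (not_le.1 hu)] at hclass
      exact Sum.inl_ne_inr hclass
    obtain ⟨u', rfl⟩ := exists_shiftUp_eq hu
    rw [componentClass_shiftUp, Sum.inr.injEq] at hclass
    rw [exists_compEdge_shiftUp_iff ha, exists_compEdge_shiftUp_iff hb]
    exact hcyc u' hclass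

theorem isCycleComp_iff (K : (Meander a b).ConnectedComponent) :
    IsCycleComp a b K ↔ Sum.elim (fun i : Fin ((c + 1) / 2) => 2 * (i : ℕ) + 1 ≠ c)
      (IsCycleComp a' b') (componentEquiv ha hb K) := by
  obtain ⟨x, rfl⟩ := (componentEquiv ha hb).symm.surjective K
  rw [Equiv.apply_symm_apply]
  rcases x with i | K'
  · exact isCycleComp_mk_of_lt ha hb (by simp only; omega)
  · exact isCycleComp_map_shiftUpHom ha hb K'

end Meander

section Counting

variable {n c : ℕ} {a b : Composition n} {a' b' : Composition (n - c)}

theorem cycleCount_of_blocks_eq_cons (ha : a.blocks = c :: a'.blocks)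
    (hb : b.blocks = c :: b'.blocks) : cycleCount a b = cycleCount a' b' + c / 2 := by
  rw [cycleCount, Nat.card_subtype_eq_add_of_equiv_sum (Meander.componentEquiv ha hb)
    (Meander.isCycleComp_iff ha hb), Nat.card_two_mul_add_one_ne, add_comm, cycleCount]

theorem pathCount_of_blocks_eq_cons (ha : a.blocks = c :: a'.blocks)
    (hb : b.blocks = c :: b'.blocks) : pathCount a b = pathCount a' b' + c % 2 := by
  have hpath (K : (Meander a b).ConnectedComponent) : ¬IsCycleComp a b K ↔
      Sum.elim (fun i : Fin ((c + 1) / 2) => ¬2 * (i : ℕ) + 1 ≠ c) (¬IsCycleComp a' b' ·)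
        (Meander.componentEquiv ha hb K) := by
    rw [Meander.isCycleComp_iff ha hb]
    cases Meander.componentEquiv ha hb K <;> rfl
  rw [pathCount, Nat.card_subtype_eq_add_of_equiv_sum (Meander.componentEquiv ha hb) hpath,
    Nat.card_not_two_mul_add_one_ne, add_comm, pathCount]

end Counting

theorem cycleCount_add_pathCount {n : ℕ} (a b : Composition n) :
    cycleCount a b + pathCount a b = Nat.card (Meander a b).ConnectedComponent := by
  rw [cycleCount, pathCount, ← Nat.card_sum, Nat.card_congr (Equiv.sumCompl _)]

theorem component_elimination_general (n : ℕ) (a b : Composition n) (c : ℕ) (as bs : List ℕ)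
    (ha : a.blocks = c :: as) (hb : b.blocks = c :: bs)
    (has : as ≠ [])
    (a' b' : Composition (n - c))
    (ha' : a'.blocks = as) (hb' : b'.blocks = bs) :
    cycleCount a b = cycleCount a' b' + c / 2 ∧
      pathCount a b = pathCount a' b' + c % 2 ∧
      seaweedInd a b = seaweedInd a' b' + c := by
  subst ha' hb'
  have hcycle := cycleCount_of_blocks_eq_cons ha hb
  have hpath := pathCount_of_blocks_eq_cons ha hb
  have : Nonempty (Fin (n - c)) :=
    ⟨⟨0, Nat.pos_of_ne_zero (mt a'.blocks_eq_nil.2 has)⟩⟩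
  have hcomponents := cycleCount_add_pathCount a' b'
  have : 0 < Nat.card (Meander a' b').ConnectedComponent := Nat.card_pos
  refine ⟨hcycle, hpath, ?_⟩
  unfold seaweedInd
  omega

theorem component_elimination (n : ℕ) (a b : Composition n) (c : ℕ) (as bs : List ℕ)
    (hc : 1 ≤ c)
    (ha : a.blocks = c :: as) (hb : b.blocks = c :: bs)
    (has : as ≠ []) (hbs : bs ≠ [])
    (a' b' : Composition (n - c))
    (ha' : a'.blocks = as) (hb' : b'.blocks = bs) :
    cycleCount a b = cycleCount a' b' + c / 2 ∧
      pathCount a b = pathCount a' b' + c % 2 ∧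
      seaweedInd a b = seaweedInd a' b' + c :=
  component_elimination_general n a b c as bs ha hb has a' b' ha' hb'
end
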